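/- arXiv:2107.14455 — 6 statements merged into one kernel-verified Lean document; each statement's English description precedes it below -/
import Mathlib

section
/- The function x ↦ x·cot(x) is strictly decreasing on the interval (0, π/2). -/
/-!
The derivative of `x cot x` is `(sin x cos x - x) / sin² x`, and its numerator
`sin (2x) / 2 - x` is negative for `x > 0` because `sin t < t` for `t > 0`.
-/

open Real Set

theorem hasDerivAt_mul_cos_div_sin {x : ℝ} (hx : sin x ≠ 0) :
    HasDerivAt (fun x : ℝ => x * (cos x / sin x)) ((sin x * cos x - x) / sin x ^ 2) x := by
  have h : HasDerivAt (fun x : ℝ => x * (cos x / sin x))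
      (1 * (cos x / sin x) + x * ((-sin x * sin x - cos x * cos x) / sin x ^ 2)) x :=
    (hasDerivAt_id' x).mul ((hasDerivAt_cos x).div (hasDerivAt_sin x) hx)
  convert h using 1
  field_simp
  linear_combination x * sin_sq_add_cos_sq x

theorem sin_mul_cos_lt_self {x : ℝ} (hx : 0 < x) : sin x * cos x < x := by
  have h := sin_lt (by positivity : 0 < 2 * x)
  rw [sin_two_mul] at h
  linarith

theorem xcot_strictAntiOn :
    StrictAntiOn (fun x : ℝ => x * (Real.cos x / Real.sin x)) (Set.Ioo 0 (π / 2)) := by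
  have hsin : ∀ x ∈ Ioo 0 (π / 2), 0 < sin x := fun x hx =>
    sin_pos_of_pos_of_lt_pi hx.1 (hx.2.trans (by linarith [pi_pos]))
  have hderiv : ∀ x ∈ Ioo 0 (π / 2),
      HasDerivAt (fun x : ℝ => x * (cos x / sin x)) ((sin x * cos x - x) / sin x ^ 2) x :=
    fun x hx => hasDerivAt_mul_cos_div_sin (hsin x hx).ne'
  refine strictAntiOn_of_hasDerivWithinAt_neg (convex_Ioo 0 (π / 2))
    (fun x hx => (hderiv x hx).continuousAt.continuousWithinAt)
    (fun x hx => (hderiv x (interior_subset hx)).hasDerivWithinAt) fun x hx => ?_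
  rw [interior_Ioo] at hx
  exact div_neg_of_neg_of_pos (sub_neg.2 (sin_mul_cos_lt_self hx.1)) (pow_pos (hsin x hx) 2)
end

section
/- For every natural number N ≥ 2 and every x ∈ (0, π/2), the inequality (N+1)·cot((π-2x)/N) - N·cot((π-2x)/(N+1)) < 0 holds. -/
/-! Since `t * cot t` has derivative `(sin t * cos t - t) / sin t ^ 2 = (sin (2 * t) / 2 - t) / sin t ^ 2 < 0`,
it is strictly decreasing on `(0, π)`. Comparing it at `y / (N + 1) < y / N` for `y = π - 2 * x`
and multiplying by `N * (N + 1) / y` gives the inequality. -/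

open Real Set

namespace Real

theorem hasDerivAt_mul_cot {t : ℝ} (ht : sin t ≠ 0) :
    HasDerivAt (fun t => t * cot t) ((sin t * cos t - t) / sin t ^ 2) t := by
  simp_rw [cot_eq_cos_div_sin, ← mul_div_assoc]
  refine (((hasDerivAt_id' t).fun_mul (hasDerivAt_cos t)).fun_div (hasDerivAt_sin t) ht).congr_deriv ?_
  linear_combination (-t / sin t ^ 2) * sin_sq_add_cos_sq t

theorem sin_mul_cos_lt {t : ℝ} (ht : 0 < t) : sin t * cos t < t := by
  have := sin_lt (by positivity : 0 < 2 * t)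
  rw [sin_two_mul] at this
  linarith

theorem strictAntiOn_mul_cot : StrictAntiOn (fun t => t * cot t) (Ioo 0 π) := by
  have hsin : ∀ t ∈ Ioo 0 π, 0 < sin t := fun t ht => sin_pos_of_pos_of_lt_pi ht.1 ht.2
  apply strictAntiOn_of_deriv_neg (convex_Ioo 0 π)
  · exact fun t ht => (hasDerivAt_mul_cot (hsin t ht).ne').continuousAt.continuousWithinAt
  · intro t ht
    rw [interior_Ioo] at ht
    rw [(hasDerivAt_mul_cot (hsin t ht).ne').deriv]
    exact div_neg_of_neg_of_pos (by linarith [sin_mul_cos_lt ht.1]) (pow_pos (hsin t ht) 2)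

theorem mul_cot_div_lt_mul_cot_div {y m n : ℝ} (hy : y ∈ Ioo 0 π) (hm : 1 ≤ m) (hmn : m < n) :
    n * cot (y / m) < m * cot (y / n) := by
  obtain ⟨hy0, hyπ⟩ := hy
  have hn : 0 < n := by linarith
  have hnm : y / n < y / m := div_lt_div_of_pos_left hy0 (by linarith) hmn
  have hmπ : y / m < π := (div_le_self hy0.le hm).trans_lt hyπ
  have key : y / m * cot (y / m) < y / n * cot (y / n) :=
    strictAntiOn_mul_cot ⟨by positivity, hnm.trans hmπ⟩ ⟨by positivity, hmπ⟩ hnm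
  calc n * cot (y / m) = m * n / y * (y / m * cot (y / m)) := by field_simp
    _ < m * n / y * (y / n * cot (y / n)) := mul_lt_mul_of_pos_left key (by positivity)
    _ = m * cot (y / n) := by field_simp

end Real

theorem cot_combination_neg (N : ℕ) (hN : 2 ≤ N) (x : ℝ) (hx : x ∈ Set.Ioo 0 (π / 2)) :
    ((N : ℝ) + 1) * (Real.cos ((π - 2 * x) / N) / Real.sin ((π - 2 * x) / N)) -
      (N : ℝ) * (Real.cos ((π - 2 * x) / (N + 1)) / Real.sin ((π - 2 * x) / (N + 1))) < 0 := by
  have hy : π - 2 * x ∈ Ioo 0 π := ⟨by linarith [hx.2], by linarith [hx.1]⟩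
  have hN1 : (1 : ℝ) ≤ N := by exact_mod_cast one_le_two.trans hN
  have := mul_cot_div_lt_mul_cot_div hy hN1 (lt_add_one (N : ℝ))
  simp only [cot_eq_cos_div_sin] at this
  linarith
end

section
/- For every natural number N ≥ 2, the function h_N(x) := sin((π-2x)/N) / sin((π-2x)/(N+1)) is strictly increasing on (0, π/2). -/
/-!
With `u = π - 2x` the claim is that `sin (u / N) / sin (u / (N + 1))` decreases for `u ∈ (0, π)`.
Writing `a = u / N > b = u / (N + 1)`, the derivative has the sign of `tan b / b - tan a / a`,
which is negative because `tan t / t` increases on `(0, π / 2)`; that in turn follows from the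
decrease of `sin t / t` on `(0, π]`, i.e. from the concavity of `sin`.
-/

open Real Set

lemma sin_div_self_strictAntiOn : StrictAntiOn (fun x => sin x / x) (Ioc 0 π) := by
  intro x hx y hy hxy
  simpa using strictConcaveOn_sin_Icc.secant_strict_mono (a := 0) ⟨le_rfl, pi_pos.le⟩
    (Ioc_subset_Icc_self hx) (Ioc_subset_Icc_self hy) hx.1.ne' hy.1.ne' hxy

-- Cross-multiplied, `tan b / b < tan a / a` is `(a - b) * sin (a + b) < (a + b) * sin (a - b)`.
lemma tan_div_self_strictMonoOn : StrictMonoOn (fun x => tan x / x) (Ioo 0 (π / 2)) := by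
  intro b hb a ha hba
  have hcos_a : 0 < cos a := cos_pos_of_mem_Ioo ⟨by linarith [ha.1, pi_pos], ha.2⟩
  have hcos_b : 0 < cos b := cos_pos_of_mem_Ioo ⟨by linarith [hb.1, pi_pos], hb.2⟩
  have key := sin_div_self_strictAntiOn ⟨sub_pos.2 hba, by linarith [hb.1, ha.2]⟩
    ⟨by linarith [hb.1], by linarith [hb.2, ha.2]⟩ (by linarith [hb.1] : a - b < a + b)
  rw [div_lt_div_iff₀ (by linarith [hb.1]) (sub_pos.2 hba), sin_add, sin_sub] at key
  simp only [tan_eq_sin_div_cos, div_div]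
  rw [div_lt_div_iff₀ (mul_pos hcos_b hb.1) (mul_pos hcos_a ha.1)]
  linear_combination key / 2

lemma sin_div_sin_div_strictAntiOn {p q : ℝ} (hp : 0 < p) (hpq : p < q) :
    StrictAntiOn (fun u => sin (u / p) / sin (u / q)) (Ioo 0 (p * (π / 2))) := by
  have hq : 0 < q := hp.trans hpq
  have hargs : ∀ u ∈ Ioo 0 (p * (π / 2)), 0 < u / q ∧ u / q < u / p ∧ u / p < π / 2 :=
    fun u hu => ⟨div_pos hu.1 hq, div_lt_div_of_pos_left hu.1 hp hpq,
      (div_lt_iff₀' hp).2 hu.2⟩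
  have hsin_pos : ∀ u ∈ Ioo 0 (p * (π / 2)), 0 < sin (u / q) := fun u hu => by
    obtain ⟨hb, hba, ha⟩ := hargs u hu
    exact sin_pos_of_pos_of_lt_pi hb (by linarith [pi_pos])
  have hderiv : ∀ u ∈ Ioo 0 (p * (π / 2)), HasDerivAt (fun u => sin (u / p) / sin (u / q))
      ((cos (u / p) * (1 / p) * sin (u / q) - sin (u / p) * (cos (u / q) * (1 / q)))
        / sin (u / q) ^ 2) u := fun u hu =>
    (((hasDerivAt_id u).div_const p).sin).div ((hasDerivAt_id u).div_const q).sin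
      (hsin_pos u hu).ne'
  refine strictAntiOn_of_hasDerivWithinAt_neg (convex_Ioo _ _)
    (fun u hu => (hderiv u hu).continuousAt.continuousWithinAt)
    (fun u hu => (hderiv u (interior_subset hu)).hasDerivWithinAt) fun u hu => ?_
  rw [interior_Ioo] at hu
  obtain ⟨hb, hba, ha⟩ := hargs u hu
  have key := tan_div_self_strictMonoOn ⟨hb, hba.trans ha⟩ ⟨hb.trans hba, ha⟩ hba
  have hcos_a : 0 < cos (u / p) := cos_pos_of_mem_Ioo ⟨by linarith [pi_pos], ha⟩
  have hcos_b : 0 < cos (u / q) := cos_pos_of_mem_Ioo ⟨by linarith [pi_pos], hba.trans ha⟩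
  simp only [tan_eq_sin_div_cos, div_div] at key
  rw [div_lt_div_iff₀ (mul_pos hcos_b hb) (mul_pos hcos_a (hb.trans hba))] at key
  have hnum : cos (u / p) * (1 / p) * sin (u / q) - sin (u / p) * (cos (u / q) * (1 / q))
      = (sin (u / q) * (cos (u / p) * (u / p)) - sin (u / p) * (cos (u / q) * (u / q))) / u := by
    field_simp [hu.1.ne']
  rw [hnum]
  exact div_neg_of_neg_of_pos (div_neg_of_neg_of_pos (by linarith) hu.1)
    (pow_pos (hsin_pos u hu) 2)

theorem hN_strictMonoOn (N : ℕ) (hN : 2 ≤ N) :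
    StrictMonoOn
      (fun x : ℝ => Real.sin ((π - 2 * x) / N) / Real.sin ((π - 2 * x) / (N + 1)))
      (Set.Ioo 0 (π / 2)) := by
  have hN_real : (2 : ℝ) ≤ N := by exact_mod_cast hN
  exact (sin_div_sin_div_strictAntiOn (by linarith) (lt_add_one (N : ℝ))).comp
    (fun x _ y _ hxy => by linarith) fun x hx => ⟨by linarith [hx.2], by nlinarith [hx.1, pi_pos]⟩
end

section
/- For every x ∈ (0, π/2), the sequence a_N := sin(π/N) / sin((π-2x)/N), for N ≥ 2, is monotone nondecreasing in N; in particular a_N ≥ a_2 = 1/cos(x) for all N ≥ 2. -/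
open Real Set

/-!
With `s = 1 / N`, `a_N = sin (π s) / sin (b s)` for `b = π - 2x ∈ (0, π)`, so it suffices that
`t ↦ sin (a t) / sin (b t)` decreases on `(0, π / (a + b)]` when `0 < b ≤ a`. Its derivative has the
sign of `a cos (a t) sin (b t) - b sin (a t) cos (b t)`, which by the addition formulas is a positive
multiple of `(a - b) sin ((a + b) t) - (a + b) sin ((a - b) t)`; this is `≤ 0` because `sin u / u`
decreases on `(0, π]` by concavity of `sin`.
-/

theorem mul_sin_le_mul_sin {y z : ℝ} (hy : 0 ≤ y) (hyz : y ≤ z) (hz : z ≤ π) :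
    y * sin z ≤ z * sin y := by
  rcases hyz.eq_or_lt with rfl | hlt
  · exact le_rfl
  have hz0 : 0 < z := hy.trans_lt hlt
  have h := strictConcaveOn_sin_Icc.concaveOn.2 (⟨le_rfl, pi_pos.le⟩ : (0 : ℝ) ∈ Icc 0 π)
    (⟨hz0.le, hz⟩ : z ∈ Icc 0 π) (by rw [sub_nonneg, div_le_one hz0]; exact hlt.le : 0 ≤ 1 - y / z)
    (div_nonneg hy hz0.le) (by ring)
  simp only [smul_eq_mul, mul_zero, sin_zero, zero_add, div_mul_cancel₀ y hz0.ne'] at h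
  rw [div_mul_eq_mul_div, div_le_iff₀ hz0] at h
  linarith

theorem mul_cos_mul_sin_le {a b t : ℝ} (hb : 0 ≤ b) (hba : b ≤ a) (ht : 0 < t)
    (habt : (a + b) * t ≤ π) :
    a * cos (a * t) * sin (b * t) ≤ b * sin (a * t) * cos (b * t) := by
  have h := mul_sin_le_mul_sin (y := (a - b) * t) (z := (a + b) * t)
    (by nlinarith) (by nlinarith) habt
  rw [mul_right_comm, mul_right_comm (a + b), mul_le_mul_iff_of_pos_right ht] at h
  rw [show (a + b) * t = a * t + b * t by ring, show (a - b) * t = a * t - b * t by ring,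
    sin_add, sin_sub] at h
  nlinarith [h]

theorem antitoneOn_sin_mul_div_sin_mul {a b : ℝ} (hb : 0 < b) (hba : b ≤ a) :
    AntitoneOn (fun t => sin (a * t) / sin (b * t)) (Ioc 0 (π / (a + b))) := by
  have hab : 0 < a + b := by linarith
  have hsin_pos : ∀ t ∈ Ioc 0 (π / (a + b)), 0 < sin (b * t) := fun t ht => by
    have := (le_div_iff₀' hab).1 ht.2
    exact sin_pos_of_pos_of_lt_pi (mul_pos hb ht.1) (by nlinarith [pi_pos, ht.1])
  have hderiv : ∀ t ∈ Ioc 0 (π / (a + b)), HasDerivAt (fun t => sin (a * t) / sin (b * t))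
      ((cos (a * t) * a * sin (b * t) - sin (a * t) * (cos (b * t) * b)) / sin (b * t) ^ 2) t :=
    fun t ht => by
      have hsa : HasDerivAt (fun t => sin (a * t)) (cos (a * t) * a) t := by
        simpa using ((hasDerivAt_id' t).const_mul a).sin
      have hsb : HasDerivAt (fun t => sin (b * t)) (cos (b * t) * b) t := by
        simpa using ((hasDerivAt_id' t).const_mul b).sin
      exact hsa.div hsb (hsin_pos t ht).ne'
  refine antitoneOn_of_deriv_nonpos (convex_Ioc _ _)
    (fun t ht => (hderiv t ht).continuousAt.continuousWithinAt)
    (fun t ht => (hderiv t (interior_subset ht)).differentiableAt.differentiableWithinAt)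
    (fun t ht => ?_)
  rw [interior_Ioc] at ht
  rw [(hderiv t (Ioo_subset_Ioc_self ht)).deriv]
  refine div_nonpos_of_nonpos_of_nonneg ?_ (sq_nonneg _)
  have := mul_cos_mul_sin_le hb.le hba ht.1 ((le_div_iff₀' hab).1 ht.2.le)
  linarith

theorem aN_monotone (x : ℝ) (hx : x ∈ Set.Ioo 0 (π / 2)) :
    (∀ N M : ℕ, 2 ≤ N → N ≤ M →
        Real.sin (π / N) / Real.sin ((π - 2 * x) / N) ≤
          Real.sin (π / M) / Real.sin ((π - 2 * x) / M)) ∧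
    Real.sin (π / 2) / Real.sin ((π - 2 * x) / 2) = 1 / Real.cos x ∧
    (∀ N : ℕ, 2 ≤ N →
        1 / Real.cos x ≤ Real.sin (π / N) / Real.sin ((π - 2 * x) / N)) := by
  obtain ⟨hx0, hx2⟩ := hx
  have hanti := antitoneOn_sin_mul_div_sin_mul (a := π) (b := π - 2 * x) (by linarith)
    (by linarith)
  have hmem : ∀ N : ℕ, 2 ≤ N → (N : ℝ)⁻¹ ∈ Ioc 0 (π / (π + (π - 2 * x))) := fun N hN => by
    have hN : (2 : ℝ) ≤ N := by exact_mod_cast hN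
    refine ⟨by positivity, ?_⟩
    rw [le_div_iff₀ (by linarith), inv_mul_le_iff₀ (by linarith)]
    nlinarith [pi_pos]
  have hmono : ∀ N M : ℕ, 2 ≤ N → N ≤ M →
      sin (π / N) / sin ((π - 2 * x) / N) ≤ sin (π / M) / sin ((π - 2 * x) / M) :=
    fun N M hN hNM => by
      have hNM' : (N : ℝ) ≤ M := by exact_mod_cast hNM
      simpa only [div_eq_mul_inv] using hanti (hmem M (hN.trans hNM)) (hmem N hN)
        (inv_anti₀ (by positivity) hNM')
  have hval : sin (π / 2) / sin ((π - 2 * x) / 2) = 1 / cos x := by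
    rw [show (π - 2 * x) / 2 = π / 2 - x by ring, sin_pi_div_two_sub, sin_pi_div_two]
  refine ⟨hmono, hval, fun N hN => hval ▸ ?_⟩
  exact_mod_cast hmono 2 N le_rfl hN
end

section
/- For every natural number N ≥ 2 and every x ∈ [0, π], the inequality sin(x)·sin(π/N) ≥ N·sin((π-x)/N)·sin(x/N) holds. -/
open Real Set

/-!
Write `x = π/2 + θ`; by the symmetry `x ↦ π - x` we may take `θ ∈ [0, π/2]`. Product-to-sum
turns the left side into `n/2 · (cos (2θ/n) - cos (π/n))`, and the difference of the two sides
vanishes at `θ = π/2`. Its derivative in `θ` has the sign of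
`sin (π/n) sin θ - sin (2θ/n)`, which is nonnegative because `s ↦ sin (l s) / sin s` is
increasing on `(0, π)` for `0 ≤ l ≤ 1`; that in turn
is the inequality `tan (l s) ≤ l tan s`, cleared of denominators.
-/

namespace Real

variable {l n : ℝ}

theorem sin_mul_mul_cos_le (hl0 : 0 ≤ l) (hl1 : l ≤ 1) {y : ℝ} (hy : y ∈ Icc 0 π) :
    sin (l * y) * cos y ≤ l * cos (l * y) * sin y := by
  set h : ℝ → ℝ := fun y => l * cos (l * y) * sin y - sin (l * y) * cos y
  have hder (y : ℝ) : HasDerivAt h ((1 - l ^ 2) * sin (l * y) * sin y) y := by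
    have hly := (hasDerivAt_id' y).const_mul l
    exact ((hly.cos.const_mul l).mul (hasDerivAt_sin y)).sub (hly.sin.mul (hasDerivAt_cos y))
      |>.congr_deriv (by ring)
  have hmono : MonotoneOn h (Icc 0 π) := by
    refine monotoneOn_of_hasDerivWithinAt_nonneg (convex_Icc 0 π)
      (fun y _ => (hder y).continuousAt.continuousWithinAt)
      (fun y _ => (hder y).hasDerivWithinAt) fun y hy => ?_
    rw [interior_Icc] at hy
    have : 0 ≤ sin (l * y) :=
      sin_nonneg_of_nonneg_of_le_pi (by nlinarith [hy.1]) (by nlinarith [hy.1, hy.2])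
    have : 0 ≤ sin y := sin_nonneg_of_nonneg_of_le_pi hy.1.le hy.2.le
    have : 0 ≤ 1 - l ^ 2 := by nlinarith
    positivity
  have := hmono (left_mem_Icc.2 pi_pos.le) hy hy.1
  simp only [h, mul_zero, sin_zero, cos_zero] at this
  linarith

theorem monotoneOn_sin_mul_div_sin (hl0 : 0 ≤ l) (hl1 : l ≤ 1) :
    MonotoneOn (fun y => sin (l * y) / sin y) (Ioo 0 π) := by
  have hsin {y : ℝ} (hy : y ∈ Ioo 0 π) : sin y ≠ 0 := (sin_pos_of_pos_of_lt_pi hy.1 hy.2).ne'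
  have hder {y : ℝ} (hy : y ∈ Ioo 0 π) : HasDerivAt (fun y => sin (l * y) / sin y)
      ((l * cos (l * y) * sin y - sin (l * y) * cos y) / sin y ^ 2) y := by
    have hly := (hasDerivAt_id' y).const_mul l
    exact (hly.sin.div (hasDerivAt_sin y) (hsin hy)).congr_deriv (by ring)
  refine monotoneOn_of_hasDerivWithinAt_nonneg (convex_Ioo 0 π)
    (f' := fun y => (l * cos (l * y) * sin y - sin (l * y) * cos y) / sin y ^ 2)
    (fun y hy => (hder hy).continuousAt.continuousWithinAt) (fun y hy => ?_) (fun y hy => ?_)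
  all_goals rw [interior_Ioo] at hy
  · exact (hder hy).hasDerivWithinAt
  · exact div_nonneg (sub_nonneg.2 (sin_mul_mul_cos_le hl0 hl1 (Ioo_subset_Icc_self hy)))
      (sq_nonneg _)

theorem sin_mul_le_sin_mul_sin_mul_pi_div_two {s : ℝ} (hl0 : 0 ≤ l) (hl1 : l ≤ 1)
    (hs0 : 0 < s) (hs : s ≤ π / 2) : sin (l * s) ≤ sin s * sin (l * (π / 2)) := by
  have hs' : s ∈ Ioo 0 π := ⟨hs0, by linarith [pi_pos]⟩
  have := monotoneOn_sin_mul_div_sin hl0 hl1 hs' ⟨pi_div_two_pos, by linarith [pi_pos]⟩ hs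
  dsimp only at this
  rwa [sin_pi_div_two, div_one, div_le_iff₀' (sin_pos_of_pos_of_lt_pi hs'.1 hs'.2)] at this

theorem half_mul_cos_sub_cos_le (hn : 2 ≤ n) {θ : ℝ} (hθ : θ ∈ Icc 0 (π / 2)) :
    n / 2 * (cos (2 * θ / n) - cos (π / n)) ≤ sin (π / n) * cos θ := by
  have hn0 : 0 < n := by linarith
  set g : ℝ → ℝ := fun θ => sin (π / n) * cos θ - n / 2 * (cos (2 * θ / n) - cos (π / n))
  have hder (θ : ℝ) : HasDerivAt g (sin (2 * θ / n) - sin (π / n) * sin θ) θ := by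
    have hθn : HasDerivAt (fun θ : ℝ => 2 * θ / n) (2 / n) θ := by
      simpa using ((hasDerivAt_id θ).const_mul 2).div_const n
    exact (((hasDerivAt_cos θ).const_mul _).sub ((hθn.cos.sub_const _).const_mul (n / 2)))
      |>.congr_deriv (by field_simp; ring)
  have hanti : AntitoneOn g (Icc 0 (π / 2)) := by
    refine antitoneOn_of_hasDerivWithinAt_nonpos (convex_Icc 0 (π / 2))
      (fun θ _ => (hder θ).continuousAt.continuousWithinAt)
      (fun θ _ => (hder θ).hasDerivWithinAt) fun θ hθ => ?_
    rw [interior_Icc] at hθ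
    -- `sin (2θ/n) ≤ sin (π/n) sin θ` is the case `l = 2θ/π`, `s = π/n`
    have key := sin_mul_le_sin_mul_sin_mul_pi_div_two (l := 2 * θ / π)
      (div_nonneg (by linarith [hθ.1]) pi_pos.le)
      ((div_le_one pi_pos).2 (by linarith [hθ.2])) (div_pos pi_pos hn0)
      (div_le_div_of_nonneg_left pi_pos.le two_pos hn)
    rw [show 2 * θ / π * (π / n) = 2 * θ / n by field_simp,
      show 2 * θ / π * (π / 2) = θ by field_simp] at key
    linarith
  have := hanti hθ ⟨pi_div_two_pos.le, le_rfl⟩ hθ.2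
  simp only [g, cos_pi_div_two, mul_zero,
    show 2 * (π / 2) / n = π / n by ring, sub_self] at this
  linarith

theorem mul_sin_mul_sin_le (hn : 2 ≤ n) {x : ℝ} (hx : x ∈ Icc 0 π) :
    n * sin ((π - x) / n) * sin (x / n) ≤ sin x * sin (π / n) := by
  wlog hx2 : π / 2 ≤ x generalizing x
  · have := this (x := π - x) ⟨by linarith [hx.2], by linarith [hx.1]⟩ (by linarith)
    rwa [sub_sub_cancel, sin_pi_sub, mul_right_comm] at this
  have hprod : n * sin ((π - x) / n) * sin (x / n) =
      n / 2 * (cos (2 * (x - π / 2) / n) - cos (π / n)) := by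
    rw [mul_assoc, ← cos_neg, show -(2 * (x - π / 2) / n) = (π - x) / n - x / n by ring,
      show π / n = (π - x) / n + x / n by ring, ← two_mul_sin_mul_sin]
    ring
  rw [hprod, ← cos_sub_pi_div_two x, mul_comm (cos _)]
  exact half_mul_cos_sub_cos_le hn ⟨by linarith, by linarith [hx.2]⟩

end Real

theorem fN_nonneg (N : ℕ) (hN : 2 ≤ N) (x : ℝ) (hx : x ∈ Set.Icc 0 π) :
    (N : ℝ) * Real.sin ((π - x) / N) * Real.sin (x / N) ≤ Real.sin x * Real.sin (π / N) :=
  mul_sin_mul_sin_le (by exact_mod_cast hN) hx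
end

section
/- For every natural number N ≥ 2 and every ω ∈ [0, π], defining Φ(N, ω) := N·sin(ω/N)·sin(π/N - ω/N) / sin(π/N), one has Φ(N, ω) ≤ Φ(2, ω) = sin(ω). -/
/-!
With `a = π / N` and `x = ω / N` the inequality reads `N sin x sin (a - x) ≤ sin (N x) sin a`.
Factoring `z ^ N - 1` over the `N`-th roots of unity gives
`2 |sin (N x)| = ∏_{k < N} |2 sin (x - k π / N)|` and `N = ∏_{0 < k < N} |2 sin (k π / N)|`.
The factors `k = 0, 1` produce `sin x sin (a - x)` and `sin a`, so it remains to see that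
`∏_{2 ≤ k < N} |2 sin (k π / N)| ≤ ∏_{2 ≤ k < N} |2 sin (x - k π / N)|`. Pairing `k` with
`N + 1 - k`, the product-to-sum formula reduces each pair to `cos a ≤ cos (a - 2 x)`.
-/

open Real Polynomial

lemma Finset.prod_le_prod_of_mul_involution {ι R : Type*} [CommSemiring R] [LinearOrder R]
    [IsStrictOrderedRing R] {s : Finset ι} {f g : ι → R} (e : ι → ι) (hes : ∀ i ∈ s, e i ∈ s)
    (hee : ∀ i ∈ s, e (e i) = i) (hf : ∀ i ∈ s, 0 ≤ f i) (hg : ∀ i ∈ s, 0 ≤ g i)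
    (h : ∀ i ∈ s, g i * g (e i) ≤ f i * f (e i)) :
    ∏ i ∈ s, g i ≤ ∏ i ∈ s, f i := by
  have hreflect (u : ι → R) : ∏ i ∈ s, u (e i) = ∏ i ∈ s, u i :=
    Finset.prod_nbij' e e hes hes hee hee fun _ _ ↦ rfl
  have hsq : (∏ i ∈ s, g i) ^ 2 ≤ (∏ i ∈ s, f i) ^ 2 := by
    simp only [sq]
    nth_rw 2 [← hreflect g]
    nth_rw 2 [← hreflect f]
    simp only [← Finset.prod_mul_distrib]
    exact Finset.prod_le_prod (fun i hi ↦ mul_nonneg (hg i hi) (hg _ (hes i hi))) h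
  exact (pow_le_pow_iff_left₀ (Finset.prod_nonneg hg) (Finset.prod_nonneg hf) two_ne_zero).mp hsq

lemma norm_exp_I_mul_ofReal_sub_exp_I_mul_ofReal (α β : ℝ) :
    ‖Complex.exp (Complex.I * α) - Complex.exp (Complex.I * β)‖ = |2 * sin ((α - β) / 2)| := by
  have h : Complex.exp (Complex.I * α) - Complex.exp (Complex.I * β) =
      Complex.exp (Complex.I * β) * (Complex.exp (Complex.I * ↑(α - β)) - 1) := by
    rw [mul_sub, mul_one, ← Complex.exp_add]
    push_cast
    ring_nf
  rw [h, norm_mul, Complex.norm_exp_I_mul_ofReal, one_mul, Complex.norm_exp_I_mul_ofReal_sub_one,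
    Real.norm_eq_abs]

lemma two_mul_abs_sin_nat_mul (n : ℕ) (hn : n ≠ 0) (x : ℝ) :
    2 * |sin (n * x)| = ∏ k ∈ Finset.range n, |2 * sin (x - k * π / n)| := by
  have h := congrArg (fun p : ℂ[X] ↦ ‖p.eval (Complex.exp (Complex.I * ↑(2 * x)))‖)
    (X_pow_sub_C_eq_prod (Complex.isPrimitiveRoot_exp n hn) (Nat.pos_of_ne_zero hn) (one_pow n))
  simp only [eval_sub, eval_pow, eval_X, eval_C, eval_prod, mul_one, norm_prod] at h
  convert h using 1
  · rw [← Complex.exp_nat_mul,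
      show (n : ℂ) * (Complex.I * ↑(2 * x)) = Complex.I * ↑(n * x * 2) by push_cast; ring,
      Complex.norm_exp_I_mul_ofReal_sub_one, Real.norm_eq_abs, abs_mul, abs_two,
      mul_div_cancel_right₀ _ two_ne_zero]
  · refine Finset.prod_congr rfl fun k _ ↦ ?_
    rw [← Complex.exp_nat_mul,
      show (k : ℂ) * (2 * π * Complex.I / n) = Complex.I * ↑(2 * (k * π / n)) by push_cast; ring,
      norm_exp_I_mul_ofReal_sub_exp_I_mul_ofReal]
    ring_nf

lemma nat_eq_prod_abs_two_mul_sin (n : ℕ) (hn : n ≠ 0) :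
    (n : ℝ) = ∏ k ∈ Finset.Ico 1 n, |2 * sin (k * π / n)| := by
  obtain ⟨m, rfl⟩ : ∃ m, n = m + 1 := ⟨n - 1, by omega⟩
  have h := congrArg (‖·‖) (Complex.isPrimitiveRoot_exp (m + 1) hn).prod_one_sub_pow_eq_order
  rw [norm_prod] at h
  rw [Finset.prod_Ico_eq_prod_range, Nat.add_sub_cancel]
  convert h.symm using 1
  · norm_cast
  · refine Finset.prod_congr rfl fun k _ ↦ ?_
    rw [← Complex.exp_nat_mul,
      show ((k + 1 : ℕ) : ℂ) * (2 * π * Complex.I / (m + 1 : ℕ)) =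
        Complex.I * ↑(2 * ((1 + k : ℕ) * π / (m + 1 : ℕ))) by push_cast; ring,
      ← norm_neg, neg_sub, Complex.norm_exp_I_mul_ofReal_sub_one, Real.norm_eq_abs]
    ring_nf

lemma abs_sin_mul_sin_sub_le {a t x : ℝ} (hat : a ≤ t) (htπ : t ≤ π) (hx0 : 0 ≤ x)
    (hxa : x ≤ a) : |sin t * sin (t - a)| ≤ |sin (t - x) * sin (t - a + x)| := by
  have hcos : cos a ≤ cos (a - 2 * x) := by
    rw [← cos_abs (a - 2 * x)]
    exact cos_le_cos_of_nonneg_of_le_pi (abs_nonneg _) (by linarith)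
      (abs_le.mpr ⟨by linarith, by linarith⟩)
  have hnonneg : 0 ≤ sin t * sin (t - a) :=
    mul_nonneg (sin_nonneg_of_nonneg_of_le_pi (by linarith) htπ)
      (sin_nonneg_of_nonneg_of_le_pi (by linarith) (by linarith))
  rw [abs_of_nonneg hnonneg]
  refine le_trans ?_ (le_abs_self _)
  have h₁ := two_mul_sin_mul_sin t (t - a)
  have h₂ := two_mul_sin_mul_sin (t - x) (t - a + x)
  rw [show t - (t - a) = a by ring] at h₁
  rw [show t - x - (t - a + x) = a - 2 * x by ring,
    show t - x + (t - a + x) = t + (t - a) by ring] at h₂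
  linarith

lemma prod_Ico_abs_two_mul_sin_le (N : ℕ) {x : ℝ} (hx0 : 0 ≤ x) (hxa : x ≤ π / N) :
    ∏ k ∈ Finset.Ico 2 N, |2 * sin (k * π / N)| ≤
      ∏ k ∈ Finset.Ico 2 N, |2 * sin (x - k * π / N)| := by
  refine Finset.prod_le_prod_of_mul_involution (fun k ↦ N + 1 - k) (fun k hk ↦ ?_)
    (fun k hk ↦ ?_) (fun _ _ ↦ abs_nonneg _) (fun _ _ ↦ abs_nonneg _) (fun k hk ↦ ?_)
  · simp only [Finset.mem_Ico] at hk ⊢; omega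
  · simp only [Finset.mem_Ico] at hk; omega
  obtain ⟨hk2, hkN⟩ := Finset.mem_Ico.mp hk
  have hN : (0 : ℝ) < N := Nat.cast_pos.mpr (by omega)
  have hk1 : (1 : ℝ) ≤ k := by exact_mod_cast (by omega : 1 ≤ k)
  have hkN' : (k : ℝ) ≤ N := by exact_mod_cast hkN.le
  have hreflect : ((N + 1 - k : ℕ) : ℝ) * π / N = π - (k * π / N - π / N) := by
    rw [Nat.cast_sub (by omega)]
    field_simp
    push_cast
    ring
  have hat : π / N ≤ k * π / N := by gcongr; nlinarith [pi_pos]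
  have htπ : k * π / N ≤ π := by rw [div_le_iff₀ hN]; nlinarith [pi_pos]
  set a := π / N
  set t := k * π / N
  have hsin : sin (x - (π - (t - a))) = -sin (t - a + x) := by
    rw [← sin_sub_pi]
    ring_nf
  rw [hreflect, sin_pi_sub, hsin, ← neg_sub t x, sin_neg]
  simp only [abs_mul, abs_neg, abs_two]
  have := abs_sin_mul_sin_sub_le hat htπ hx0 hxa
  rw [abs_mul, abs_mul] at this
  nlinarith

lemma nat_mul_abs_sin_mul_sin_le (N : ℕ) (hN : 2 ≤ N) {x : ℝ} (hx0 : 0 ≤ x) (hxa : x ≤ π / N) :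
    N * |sin x * sin (π / N - x)| ≤ |sin (N * x)| * sin (π / N) := by
  have hN0 : N ≠ 0 := by omega
  have hsin := two_mul_abs_sin_nat_mul N hN0 x
  have hnat := nat_eq_prod_abs_two_mul_sin N hN0
  rw [Finset.range_eq_Ico, Finset.prod_eq_prod_Ico_succ_bot (by omega),
    Finset.prod_eq_prod_Ico_succ_bot (by omega)] at hsin
  rw [Finset.prod_eq_prod_Ico_succ_bot (by omega)] at hnat
  simp only [Nat.cast_zero, zero_mul, zero_div, sub_zero, Nat.cast_one, one_mul, zero_add,
    Nat.reduceAdd] at hsin hnat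
  rw [← neg_sub, sin_neg, mul_neg, abs_neg] at hsin
  have hpair := prod_Ico_abs_two_mul_sin_le N hx0 hxa
  have ha : 0 ≤ sin (π / N) := sin_nonneg_of_nonneg_of_le_pi (by positivity)
    (div_le_self pi_pos.le (by exact_mod_cast (by omega : 1 ≤ N)))
  set G := ∏ k ∈ Finset.Ico 2 N, |2 * sin (k * π / N)|
  set F := ∏ k ∈ Finset.Ico 2 N, |2 * sin (x - k * π / N)|
  calc (N : ℝ) * |sin x * sin (π / N - x)|
      = 2 * sin (π / N) * G * |sin x * sin (π / N - x)| := by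
        nth_rw 1 [hnat]
        rw [abs_mul, abs_two, abs_of_nonneg ha]
    _ ≤ 2 * sin (π / N) * F * |sin x * sin (π / N - x)| := by gcongr
    _ = |sin (N * x)| * sin (π / N) := by
        simp only [abs_mul, abs_two] at hsin ⊢
        linear_combination (-sin (π / N) / 2) * hsin

theorem Phi_le_Phi_two (N : ℕ) (hN : 2 ≤ N) (ω : ℝ) (hω : ω ∈ Set.Icc 0 π) :
    (N : ℝ) * Real.sin (ω / N) * Real.sin (π / N - ω / N) / Real.sin (π / N) ≤
      (2 : ℝ) * Real.sin (ω / 2) * Real.sin (π / 2 - ω / 2) / Real.sin (π / 2) ∧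
    (2 : ℝ) * Real.sin (ω / 2) * Real.sin (π / 2 - ω / 2) / Real.sin (π / 2) = Real.sin ω := by
  have hΦ₂ : 2 * sin (ω / 2) * sin (π / 2 - ω / 2) / sin (π / 2) = sin ω := by
    rw [sin_pi_div_two_sub, sin_pi_div_two, div_one, ← sin_two_mul, mul_div_cancel₀ _ two_ne_zero]
  refine ⟨?_, hΦ₂⟩
  have hN0 : (0 : ℝ) < N := Nat.cast_pos.mpr (by omega)
  have hsin_pos : 0 < sin (π / N) := sin_pos_of_pos_of_lt_pi (by positivity)
    (div_lt_self pi_pos (by exact_mod_cast (by omega : 1 < N)))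
  have key := nat_mul_abs_sin_mul_sin_le N hN (div_nonneg hω.1 hN0.le)
    (div_le_div_of_nonneg_right hω.2 hN0.le)
  rw [mul_div_cancel₀ _ hN0.ne', abs_of_nonneg (sin_nonneg_of_nonneg_of_le_pi hω.1 hω.2)] at key
  rw [hΦ₂, div_le_iff₀ hsin_pos, mul_assoc]
  exact (mul_le_mul_of_nonneg_left (le_abs_self _) hN0.le).trans key
end
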